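/- Let G=(N,Σ,P,S) be a context-free grammar, possibly with ε-rules, and let w∈L(G). Then a parse tree for w obtained from a shortest derivation of w has height at most max{2|w|·|N|, |N|}. -/

import Mathlib

namespace Ocfg

/-- A symbol: nonterminal or terminal. -/
inductive Sym (N T : Type) : Type
  | nt : N → Sym N T
  | tm : T → Sym N T

/-- An (ordered) context-free grammar: each nonterminal has an ordered
list of right-hand sides; `start` is the start nonterminal. -/
structure OCFG (N T : Type) : Type where
  prods : N → List (List (Sym N T))
  start : N

/-- Ordered ranked trees used as parse trees: terminal leaves, ε-leaves,
and internal nodes labelled by a nonterminal together with the index of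
the rule applied there. -/
inductive PTree (N T : Type) : Type
  | leaf : T → PTree N T
  | eps  : PTree N T
  | node : N → ℕ → List (PTree N T) → PTree N T

mutual
/-- `ParseFrom G A w t`: `t` is a parse tree with root nonterminal `A`
and yield `w`. -/
inductive ParseFrom {N T : Type} (G : OCFG N T) : N → List T → PTree N T → Prop
  | epsNode (A : N) (i : ℕ) :
      (G.prods A)[i]? = some [] →
      ParseFrom G A [] (PTree.node A i [PTree.eps])
  | node (A : N) (i : ℕ) (r : List (Sym N T)) (w : List T) (cs : List (PTree N T)) :
      (G.prods A)[i]? = some r → r ≠ [] → ParseSeq G r w cs →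
      ParseFrom G A w (PTree.node A i cs)

/-- `ParseSeq G r w cs`: the trees `cs` match, in order, the symbols of `r`,
with concatenated yield `w`. -/
inductive ParseSeq {N T : Type} (G : OCFG N T) : List (Sym N T) → List T → List (PTree N T) → Prop
  | nil : ParseSeq G [] [] []
  | consTm (a : T) (r : List (Sym N T)) (w : List T) (cs : List (PTree N T)) :
      ParseSeq G r w cs →
      ParseSeq G (Sym.tm a :: r) (a :: w) (PTree.leaf a :: cs)
  | consNt (A : N) (t : PTree N T) (wA : List T) (r : List (Sym N T)) (w : List T)
      (cs : List (PTree N T)) :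
      ParseFrom G A wA t → ParseSeq G r w cs →
      ParseSeq G (Sym.nt A :: r) (wA ++ w) (t :: cs)
end

/-- The set `P_G(w)` of parse trees of `w`. -/
def parseTrees {N T : Type} (G : OCFG N T) (w : List T) : Set (PTree N T) :=
  {t | ParseFrom G G.start w t}

/-- `n(t)`: the sequence of rule indices of `t`, in pre-order. -/
def PTree.idxSeq {N T : Type} : PTree N T → List ℕ
  | .leaf _ => []
  | .eps => []
  | .node _ i cs => i :: (cs.attach.map (fun c => PTree.idxSeq c.1)).flatten
decreasing_by
  have := List.sizeOf_lt_of_mem c.2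
  simp_wf
  omega

/-- The order `≺_G` on parse trees: lexicographic comparison of the
pre-order rule-index sequences. -/
def treeLT {N T : Type} (t₁ t₂ : PTree N T) : Prop :=
  List.Lex (· < ·) t₁.idxSeq t₂.idxSeq

/-- One-step derivation relation `⇒` of the underlying CFG. -/
def OCFG.Step {N T : Type} (G : OCFG N T) (u v : List (Sym N T)) : Prop :=
  ∃ (u₁ u₂ : List (Sym N T)) (A : N) (r : List (Sym N T)),
    r ∈ G.prods A ∧ u = u₁ ++ Sym.nt A :: u₂ ∧ v = u₁ ++ r ++ u₂

/-- `⇒*`. -/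
def OCFG.Derives {N T : Type} (G : OCFG N T) : List (Sym N T) → List (Sym N T) → Prop :=
  Relation.ReflTransGen G.Step

/-- A nonterminal is useful if it occurs in some sentential form derivable from
the start symbol and derives some terminal string. -/
def Useful {N T : Type} (G : OCFG N T) (A : N) : Prop :=
  (∃ u₁ u₂ : List (Sym N T), G.Derives [Sym.nt G.start] (u₁ ++ Sym.nt A :: u₂)) ∧
  (∃ w : List T, G.Derives [Sym.nt A] (w.map Sym.tm))

/-- `G` is cyclic if `A ⇒⁺ A` for some nonterminal `A`. -/
def Cyclic {N T : Type} (G : OCFG N T) : Prop :=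
  ∃ A : N, Relation.TransGen G.Step [Sym.nt A] [Sym.nt A]

/-- `G` has no ε-rules. -/
def NoEpsRules {N T : Type} (G : OCFG N T) : Prop :=
  ∀ (A : N) (r : List (Sym N T)), r ∈ G.prods A → r ≠ []

/-- A unit-rule step: `A → B` is a rule of `G`. -/
def UnitStep {N T : Type} (G : OCFG N T) (A B : N) : Prop :=
  [Sym.nt B] ∈ G.prods A

/-- `G` has a cycle of unit rules. -/
def HasUnitCycle {N T : Type} (G : OCFG N T) : Prop :=
  ∃ A : N, Relation.TransGen (UnitStep G) A A

/-- `G` is well-ordered: for every string `w`, every nonempty subset of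
`P_G(w)` has a `≺_G`-least element. -/
def WellOrderedG {N T : Type} (G : OCFG N T) : Prop :=
  ∀ (w : List T) (Φ : Set (PTree N T)), Φ ⊆ parseTrees G w → Φ.Nonempty →
    ∃ t ∈ Φ, ∀ t' ∈ Φ, t = t' ∨ treeLT t t'

/-- `t` is the `≺_G`-least parse tree of `w`. -/
def IsLeastTree {N T : Type} (G : OCFG N T) (w : List T) (t : PTree N T) : Prop :=
  ParseFrom G G.start w t ∧ ∀ t', ParseFrom G G.start w t' → t = t' ∨ treeLT t t'

/-- `G` has least parse trees. -/
def HasLeastTrees {N T : Type} (G : OCFG N T) : Prop :=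
  ∀ w : List T, (parseTrees G w).Nonempty → ∃ t, IsLeastTree G w t

/-- Derivations of a given length (number of steps). -/
inductive DerivesIn {N T : Type} (G : OCFG N T) : List (Sym N T) → List (Sym N T) → ℕ → Prop
  | refl (u : List (Sym N T)) : DerivesIn G u u 0
  | step (u v w : List (Sym N T)) (n : ℕ) :
      G.Step u v → DerivesIn G v w n → DerivesIn G u w (n + 1)

/-- Number of rule applications in a parse tree (= length of the
corresponding leftmost derivation). -/
def PTree.numRules {N T : Type} : PTree N T → ℕ
  | .leaf _ => 0
  | .eps => 0
  | .node _ _ cs => 1 + ((cs.attach.map (fun c => PTree.numRules c.1)).foldr (· + ·) 0)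
decreasing_by
  have := List.sizeOf_lt_of_mem c.2
  simp_wf
  omega

/-- Height of a tree: a single leaf has height 0. -/
def PTree.height {N T : Type} : PTree N T → ℕ
  | .leaf _ => 0
  | .eps => 0
  | .node _ _ cs => 1 + ((cs.attach.map (fun c => PTree.height c.1)).foldr max 0)
decreasing_by
  have := List.sizeOf_lt_of_mem c.2
  simp_wf
  omega

/-- The language of `G`. -/
def langOf {N T : Type} (G : OCFG N T) : Language T :=
  {w | ∃ t, ParseFrom G G.start w t}

end Ocfg

open Ocfg

/-! A shortest parse tree cannot contain two nodes with the same nonterminal and the same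
yield on one branch, since grafting the lower subtree in place of the upper one would
save rule applications. Along a branch the yields are infixes of one another, so every
run of nodes with equal yield has at most `|N|` nodes and the yield shrinks between runs;
this gives height at most `(|w| + 1)·|N|`. The induction tracks the run through the set
`F` of nonterminals already seen above the current node with the current yield. -/

namespace Ocfg

variable {N T : Type}

theorem PTree.numRules_node (A : N) (i : ℕ) (cs : List (PTree N T)) :
    (PTree.node A i cs).numRules = (cs.map PTree.numRules).sum + 1 := by
  rw [PTree.numRules, List.attach_map_val, Nat.add_comm]
  rfl

theorem PTree.numRules_lt_of_mem {A : N} {i : ℕ} {c : PTree N T} {cs : List (PTree N T)}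
    (hc : c ∈ cs) : c.numRules < (PTree.node A i cs).numRules := by
  rw [PTree.numRules_node]
  have := List.le_sum_of_mem (List.mem_map_of_mem (f := PTree.numRules) hc)
  omega

theorem PTree.height_node_le {A : N} {i : ℕ} {cs : List (PTree N T)} {k : ℕ}
    (h : ∀ c ∈ cs, c.height ≤ k) : (PTree.node A i cs).height ≤ k + 1 := by
  rw [PTree.height, List.attach_map_val, Nat.add_comm]
  suffices (cs.map PTree.height).foldr max 0 ≤ k by omega
  induction cs with
  | nil => simp
  | cons c cs ih =>
    simp only [List.map_cons, List.foldr_cons, List.forall_mem_cons] at h ⊢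
    exact max_le h.1 (ih h.2)

theorem ParseFrom.exists_eq_node {G : OCFG N T} {A : N} {v : List T} {t : PTree N T}
    (ht : ParseFrom G A v t) : ∃ i cs, t = PTree.node A i cs := by
  cases ht <;> exact ⟨_, _, rfl⟩

theorem ParseSeq.exchange {G : OCFG N T} {r : List (Sym N T)} :
    ∀ {v : List T} {cs : List (PTree N T)}, ParseSeq G r v cs → ∀ c ∈ cs,
      (∃ a, c = PTree.leaf a) ∨ ∃ B u, u <:+: v ∧ ParseFrom G B u c ∧
        ∀ s, ParseFrom G B u s → ∃ cs', ParseSeq G r v cs' ∧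
          (cs'.map PTree.numRules).sum + c.numRules = (cs.map PTree.numRules).sum + s.numRules := by
  induction r with
  | nil =>
    rintro v cs ⟨⟩ c hc
    simp at hc
  | cons _ r ih =>
    intro v cs h c hc
    cases h with
    | consTm a _ w cs₀ h₀ =>
      rcases List.mem_cons.mp hc with rfl | hc₀
      · exact .inl ⟨a, rfl⟩
      refine (ih h₀ c hc₀).imp_right ?_
      rintro ⟨B, u, hu, hc, hexch⟩
      refine ⟨B, u, List.infix_cons hu, hc, fun s hs => ?_⟩
      obtain ⟨cs', hcs', hsum⟩ := hexch s hs
      exact ⟨_, hcs'.consTm a, by simp only [List.map_cons, List.sum_cons]; omega⟩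
    | consNt A t wA _ w cs₀ hA h₀ =>
      rcases List.mem_cons.mp hc with rfl | hc₀
      · refine .inr ⟨A, wA, List.infix_append [] wA w, hA, fun s hs =>
          ⟨_, .consNt A s wA _ w cs₀ hs h₀, ?_⟩⟩
        simp only [List.map_cons, List.sum_cons]
        omega
      refine (ih h₀ c hc₀).imp_right ?_
      rintro ⟨B, u, hu, hc, hexch⟩
      refine ⟨B, u, hu.trans (List.suffix_append wA w).isInfix, hc, fun s hs => ?_⟩
      obtain ⟨cs', hcs', hsum⟩ := hexch s hs
      exact ⟨_, .consNt A t wA _ w cs' hA hcs', by simp only [List.map_cons, List.sum_cons]; omega⟩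

def IsShortestParse (G : OCFG N T) (A : N) (v : List T) (t : PTree N T) : Prop :=
  ParseFrom G A v t ∧ ∀ s, ParseFrom G A v s → t.numRules ≤ s.numRules

theorem IsShortestParse.child {G : OCFG N T} {A : N} {i : ℕ} {v : List T}
    {cs : List (PTree N T)} {c : PTree N T} (ht : IsShortestParse G A v (.node A i cs))
    (hc : c ∈ cs) :
    (∃ a, c = PTree.leaf a) ∨ c = PTree.eps ∨ ∃ B u, u <:+: v ∧ IsShortestParse G B u c := by
  obtain ⟨hparse, hmin⟩ := ht
  cases hparse with
  | epsNode _ _ _ => exact .inr (.inl (List.mem_singleton.mp hc))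
  | node _ _ r _ _ hrule hr hseq =>
    refine (hseq.exchange c hc).imp_right fun ⟨B, u, hu, hcB, hexch⟩ => .inr ⟨B, u, hu, hcB, ?_⟩
    intro s hs
    obtain ⟨cs', hcs', hsum⟩ := hexch s hs
    have := hmin _ (.node A i r v cs' hrule hr hcs')
    rw [PTree.numRules_node, PTree.numRules_node] at this
    omega

theorem IsShortestParse.height_add_card_le [Fintype N] {G : OCFG N T} (n : ℕ) :
    ∀ (t : PTree N T) (A : N) (v : List T) (F : Finset N), t.numRules = n →
      IsShortestParse G A v t → (∀ B ∈ F, ∀ s, ParseFrom G B v s → t.numRules < s.numRules) →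
      t.height + F.card ≤ (v.length + 1) * Fintype.card N := by
  classical
  induction n using Nat.strong_induction_on with
  | _ n IH =>
    intro t A v F hn ht hF
    obtain ⟨i, cs, rfl⟩ := ht.1.exists_eq_node
    have hA : A ∉ F := fun hA => (hF A hA _ ht.1).false
    have hcard : F.card + 1 ≤ Fintype.card N := by
      simpa [Finset.card_insert_of_notMem hA] using Finset.card_le_univ (insert A F)
    have hbound : Fintype.card N ≤ (v.length + 1) * Fintype.card N :=
      Nat.le_mul_of_pos_left _ v.length.succ_pos
    suffices ∀ c ∈ cs, c.height ≤ (v.length + 1) * Fintype.card N - (F.card + 1) by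
      have := PTree.height_node_le (A := A) (i := i) this
      omega
    intro c hc
    have hlt := PTree.numRules_lt_of_mem (A := A) (i := i) hc
    rcases ht.child hc with ⟨a, rfl⟩ | rfl | ⟨B, u, hu, hcB⟩
    · simp [PTree.height]
    · simp [PTree.height]
    rcases hu.length_le.lt_or_eq with hlen | hlen
    · have hc := IH _ (hn ▸ hlt) c B u ∅ rfl hcB (by simp)
      have : (u.length + 1) * Fintype.card N ≤ v.length * Fintype.card N :=
        Nat.mul_le_mul_right _ hlen
      rw [Finset.card_empty, add_zero] at hc
      rw [Nat.succ_mul]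
      omega
    · obtain rfl := hu.eq_of_length hlen
      have hc := IH _ (hn ▸ hlt) c B u (insert A F) rfl hcB fun C hC s hs => by
        rcases Finset.mem_insert.mp hC with rfl | hC
        · exact hlt.trans_le (ht.2 s hs)
        · exact hlt.trans (hF C hC s hs)
      rw [Finset.card_insert_of_notMem hA] at hc
      omega

end Ocfg

theorem Nat.add_one_mul_le_max_two_mul (n k : ℕ) : (n + 1) * k ≤ max (2 * n * k) k := by
  rcases n.eq_zero_or_pos with rfl | hn
  · simp
  · exact le_max_of_le_left (Nat.mul_le_mul_right _ (by omega))

/-- In a CFG (possibly with ε-rules), a parse tree of `w`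
obtained from a shortest derivation (i.e. one with a minimal number of rule
applications) has height at most `max(2|w|·|N|, |N|)`. -/
theorem stmt10 {N T : Type} [Fintype N] [Fintype T] (G : OCFG N T)
    (w : List T) (t : PTree N T)
    (ht : ParseFrom G G.start w t)
    (hshortest : ∀ t' : PTree N T, ParseFrom G G.start w t' → t.numRules ≤ t'.numRules) :
    t.height ≤ max (2 * w.length * Fintype.card N) (Fintype.card N) := by
  have h := IsShortestParse.height_add_card_le _ t G.start w ∅ rfl ⟨ht, hshortest⟩ (by simp)
  rw [Finset.card_empty, add_zero] at h
  exact h.trans (Nat.add_one_mul_le_max_two_mul _ _)
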